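/- arXiv:1709.07375 — 4 statements merged into one kernel-verified Lean document; each statement's English description precedes it below -/
import Mathlib

section
/- Let h be the inverse of g(u) = ∫₀^u (1 + 2κα²|s|^{2(2α-1)})^{1/2} ds (extended oddly), with 0 < α < 1/2 and κ > 0. Then h(t)^{2α}/t → √(2/κ) as t → 0⁺. -/
open Real Filter MeasureTheory Set

/-- The change-of-variable function `g` (inverse of `h`). -/
noncomputable def gfun (κ α : ℝ) (u : ℝ) : ℝ :=
  ∫ s in (0:ℝ)..u, Real.sqrt (1 + 2*κ*α^2 * |s| ^ (2*(2*α-1)))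

lemma sqrt_one_add_le {x : ℝ} (hx : 0 ≤ x) : Real.sqrt (1 + x) ≤ 1 + Real.sqrt x := by
  have h1 : (1 : ℝ) + x ≤ (1 + Real.sqrt x) ^ 2 := by
    have := Real.sq_sqrt hx
    have := Real.sqrt_nonneg x
    nlinarith
  calc Real.sqrt (1 + x) ≤ Real.sqrt ((1 + Real.sqrt x) ^ 2) := Real.sqrt_le_sqrt h1
    _ = 1 + Real.sqrt x := Real.sqrt_sq (by positivity)

lemma sqrt_mul_rpow {c s q : ℝ} (hc : 0 ≤ c) (hs : 0 < s) :
    Real.sqrt (c * s ^ (2 * q)) = Real.sqrt c * s ^ q := by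
  have h2 : s ^ (2 * q) = (s ^ q) ^ 2 := by
    rw [← Real.rpow_natCast (s ^ q) 2, ← Real.rpow_mul hs.le]
    norm_num [mul_comm]
  rw [Real.sqrt_mul hc, h2, Real.sqrt_sq (Real.rpow_nonneg hs.le q)]

theorem stmt4 (κ α : ℝ) (hκ : 0 < κ) (hα0 : 0 < α) (hα1 : α < 1/2) (h : ℝ → ℝ)
    (hinv1 : Function.LeftInverse h (gfun κ α)) (hinv2 : Function.RightInverse h (gfun κ α)) :
    Filter.Tendsto (fun t : ℝ => (h t) ^ (2*α) / t) (nhdsWithin 0 (Set.Ioi 0))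
      (nhds (Real.sqrt (2/κ))) := by
  set c : ℝ := 2*κ*α^2 with hc_def
  have hc : 0 < c := by positivity
  set q : ℝ := 2*α - 1 with hq_def
  have hq1 : -1 < q := by simp [hq_def]; linarith
  have hq0 : q < 0 := by simp [hq_def]; linarith
  have hq2 : q + 1 = 2*α := by ring
  have hq2q : (2:ℝ)*q ≠ 0 := ne_of_lt (by linarith)
  set f : ℝ → ℝ := fun s => Real.sqrt (1 + c * |s| ^ (2*q)) with hf_def
  set b : ℝ := Real.sqrt (2*κ) / 2 with hb_def
  have hb : 0 < b := by
    have : 0 < Real.sqrt (2*κ) := Real.sqrt_pos.2 (by linarith)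
    positivity
  -- sqrt c = α * sqrt (2κ)
  have hsc : Real.sqrt c = Real.sqrt (2*κ) * α := by
    rw [hc_def, show 2*κ*α^2 = (2*κ) * α^2 by ring, Real.sqrt_mul (by positivity),
      Real.sqrt_sq hα0.le]
  -- pointwise bounds for s > 0
  have hlow : ∀ s : ℝ, 0 < s → Real.sqrt c * s ^ q ≤ f s := by
    intro s hs
    rw [← sqrt_mul_rpow hc.le hs, hf_def]
    simp only [abs_of_pos hs]
    exact Real.sqrt_le_sqrt (by nlinarith [Real.rpow_nonneg hs.le (2*q)])
  have hupp : ∀ s : ℝ, 0 < s → f s ≤ 1 + Real.sqrt c * s ^ q := by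
    intro s hs
    rw [← sqrt_mul_rpow hc.le hs, hf_def]
    simp only [abs_of_pos hs]
    exact sqrt_one_add_le (by positivity)
  have hf_nonneg : ∀ s, 0 ≤ f s := fun s => Real.sqrt_nonneg _
  have hf_meas : ∀ u : ℝ, AEStronglyMeasurable f (volume.restrict (Set.uIoc 0 u)) := by
    intro u
    exact Measurable.aestronglyMeasurable (by fun_prop)
  -- integrability on [0, u]
  have hfi : ∀ u : ℝ, 0 < u → IntervalIntegrable f volume 0 u := by
    intro u hu
    have hg0 : IntervalIntegrable (fun s : ℝ => 1 + Real.sqrt c * s ^ q)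
        volume 0 u :=
      intervalIntegrable_const.add ((intervalIntegral.intervalIntegrable_rpow' hq1).const_mul _)
    apply hg0.mono_fun (hf_meas u)
    filter_upwards [MeasureTheory.ae_restrict_mem measurableSet_uIoc] with s hs
    rw [Set.uIoc_of_le hu.le] at hs
    have hs0 : 0 < s := hs.1
    have h1 : ‖f s‖ = f s := Real.norm_of_nonneg (hf_nonneg s)
    have h2 : ‖1 + Real.sqrt c * s ^ q‖ = 1 + Real.sqrt c * s ^ q := by
      refine Real.norm_of_nonneg ?_
      have := Real.rpow_nonneg hs0.le q
      have := Real.sqrt_nonneg c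
      positivity
    rw [h1, h2]
    exact hupp s hs0
  have hrpow_int : ∀ u : ℝ, IntervalIntegrable (fun s : ℝ => Real.sqrt c * s ^ q)
      volume 0 u := fun u => (intervalIntegral.intervalIntegrable_rpow' hq1).const_mul _
  -- the value of ∫₀ᵘ √c s^q = b * u^(2α)
  have hval : ∀ u : ℝ, 0 < u →
      ∫ s in (0:ℝ)..u, Real.sqrt c * s ^ q = b * u ^ (2*α) := by
    intro u hu
    rw [intervalIntegral.integral_const_mul, integral_rpow (Or.inl hq1), hq2,
      Real.zero_rpow (by positivity), hsc, hb_def]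
    have h2α : (2:ℝ)*α ≠ 0 := by positivity
    field_simp
    ring
  -- lower bound on g
  have hg_low : ∀ u : ℝ, 0 < u → b * u ^ (2*α) ≤ gfun κ α u := by
    intro u hu
    have := intervalIntegral.integral_mono_on hu.le (hrpow_int u) (hfi u hu)
      (fun s hs => by
        rcases eq_or_lt_of_le hs.1 with h0 | h0
        · rw [← h0, Real.zero_rpow (ne_of_lt hq0), mul_zero]
          exact hf_nonneg 0
        · exact hlow s h0)
    rw [hval u hu] at this
    exact this
  -- upper bound on g
  have hg_upp : ∀ u : ℝ, 0 < u → gfun κ α u ≤ b * u ^ (2*α) + u := by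
    intro u hu
    have hint : IntervalIntegrable (fun s : ℝ => Real.sqrt c * s ^ q + 1)
        volume 0 u := (hrpow_int u).add intervalIntegrable_const
    have := intervalIntegral.integral_mono_on hu.le (hfi u hu) hint
      (fun s hs => by
        rcases eq_or_lt_of_le hs.1 with h0 | h0
        · rw [← h0]
          simp only [hf_def, abs_zero, Real.zero_rpow hq2q,
            mul_zero, add_zero, Real.sqrt_one, Real.zero_rpow (ne_of_lt hq0)]
          norm_num
        · have := hupp s h0; linarith)
    rw [intervalIntegral.integral_add (hrpow_int u) intervalIntegrable_const,
      hval u hu, intervalIntegral.integral_const, sub_zero, smul_eq_mul, mul_one] at this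
    exact this
  -- g(u) ≤ 0 for u ≤ 0
  have hg_nonpos : ∀ u : ℝ, u ≤ 0 → gfun κ α u ≤ 0 := by
    intro u hu
    unfold gfun
    rw [← neg_neg (∫ s in (0:ℝ)..u, Real.sqrt (1 + 2*κ*α^2 * |s| ^ (2*(2*α-1)))),
      ← intervalIntegral.integral_symm]
    have : 0 ≤ ∫ s in u..(0:ℝ), Real.sqrt (1 + 2*κ*α^2 * |s| ^ (2*(2*α-1))) :=
      intervalIntegral.integral_nonneg hu (fun s _ => Real.sqrt_nonneg _)
    linarith
  -- for t > 0 : 0 < h t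
  have hpos : ∀ t : ℝ, 0 < t → 0 < h t := by
    intro t ht
    by_contra hle
    push_neg at hle
    have := hg_nonpos (h t) hle
    rw [hinv2 t] at this
    linarith
  -- key bounds : b (h t)^(2α) ≤ t ≤ b (h t)^(2α) + h t
  have hkey : ∀ t : ℝ, 0 < t →
      b * (h t) ^ (2*α) ≤ t ∧ t ≤ b * (h t) ^ (2*α) + h t := by
    intro t ht
    have hu := hpos t ht
    refine ⟨?_, ?_⟩
    · have := hg_low (h t) hu; rwa [hinv2 t] at this
    · have := hg_upp (h t) hu; rwa [hinv2 t] at this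
  -- g(u) ≥ u for u > 0
  have hg_ge : ∀ u : ℝ, 0 < u → u ≤ gfun κ α u := by
    intro u hu
    have := intervalIntegral.integral_mono_on hu.le intervalIntegrable_const (hfi u hu)
      (fun s _ => by
        show (1:ℝ) ≤ f s
        rw [hf_def]
        have h1 : (0:ℝ) ≤ c * |s| ^ (2*q) := by
          have := Real.rpow_nonneg (abs_nonneg s) (2*q); positivity
        calc (1:ℝ) = Real.sqrt 1 := Real.sqrt_one.symm
          _ ≤ _ := Real.sqrt_le_sqrt (by linarith))
    rw [intervalIntegral.integral_const, sub_zero, smul_eq_mul, mul_one] at this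
    exact this
  -- h t ≤ t, hence h t → 0
  have hle_t : ∀ t : ℝ, 0 < t → h t ≤ t := by
    intro t ht
    have := hg_ge (h t) (hpos t ht)
    rwa [hinv2 t] at this
  -- h t → 0 within Ioi 0
  have hh0 : Tendsto h (nhdsWithin 0 (Set.Ioi 0)) (nhds 0) := by
    apply tendsto_of_tendsto_of_tendsto_of_le_of_le' tendsto_const_nhds
      (tendsto_id.mono_left nhdsWithin_le_nhds)
    · filter_upwards [self_mem_nhdsWithin] with t ht
      exact (hpos t ht).le
    · filter_upwards [self_mem_nhdsWithin] with t ht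
      exact hle_t t ht
  -- (h t)^(1-2α) → 0
  have hpow0 : Tendsto (fun t => (h t) ^ (1 - 2*α)) (nhdsWithin 0 (Set.Ioi 0)) (nhds 0) := by
    have hcont : ContinuousAt (fun x : ℝ => x ^ (1 - 2*α)) 0 :=
      Real.continuousAt_rpow_const 0 (1 - 2*α) (Or.inr (by linarith))
    have := hcont.tendsto.comp hh0
    rwa [Real.zero_rpow (by linarith : 1 - 2*α ≠ 0)] at this
  -- sqrt(2/κ) = 1/b
  have hsqk : Real.sqrt (2*κ) ≠ 0 := ne_of_gt (Real.sqrt_pos.2 (by linarith))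
  have h4 : Real.sqrt (2/κ) * Real.sqrt (2*κ) = 2 := by
    rw [← Real.sqrt_mul (by positivity), show (2/κ) * (2*κ) = 4 by field_simp; ring,
      show (4:ℝ) = 2^2 by norm_num, Real.sqrt_sq (by norm_num)]
  have hsb : Real.sqrt (2/κ) = 1 / b := by
    rw [eq_div_iff (ne_of_gt hb), hb_def, ← mul_div_assoc, h4]
    norm_num
  -- the lower comparison function tends to 1/b
  have hlowlim : Tendsto (fun t => 1 / (b + (h t) ^ (1 - 2*α)))
      (nhdsWithin 0 (Set.Ioi 0)) (nhds (1 / b)) := by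
    have : Tendsto (fun t => b + (h t) ^ (1 - 2*α)) (nhdsWithin 0 (Set.Ioi 0))
        (nhds (b + 0)) := tendsto_const_nhds.add hpow0
    rw [add_zero] at this
    exact tendsto_const_nhds.div this (ne_of_gt hb)
  rw [hsb]
  -- squeeze
  apply tendsto_of_tendsto_of_tendsto_of_le_of_le' hlowlim tendsto_const_nhds
  · -- lower bound : 1/(b + h^(1-2α)) ≤ h^(2α)/t
    filter_upwards [self_mem_nhdsWithin] with t ht
    have ht : 0 < t := ht
    have hu : 0 < h t := hpos t ht
    have hup : 0 < (h t) ^ (2*α) := Real.rpow_pos_of_pos hu _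
    have hsplit : h t = (h t) ^ (2*α) * (h t) ^ (1 - 2*α) := by
      rw [← Real.rpow_add hu]; norm_num
    have h2 := (hkey t ht).2
    have hden : t ≤ (h t) ^ (2*α) * (b + (h t) ^ (1 - 2*α)) := by nlinarith [h2, hsplit]
    have hdpos : 0 < b + (h t) ^ (1 - 2*α) := by
      have := Real.rpow_nonneg hu.le (1 - 2*α); linarith
    rw [div_le_div_iff₀ hdpos ht]
    calc 1 * t = t := one_mul t
      _ ≤ (h t) ^ (2*α) * (b + (h t) ^ (1 - 2*α)) := hden
  · -- upper bound : h^(2α)/t ≤ 1/b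
    filter_upwards [self_mem_nhdsWithin] with t ht
    have ht : 0 < t := ht
    have hu : 0 < h t := hpos t ht
    have hup : 0 < (h t) ^ (2*α) := Real.rpow_pos_of_pos hu _
    have h1 := (hkey t ht).1
    rw [div_le_div_iff₀ ht hb]
    nlinarith
end

section
/- Let h be the inverse of g(u) = ∫₀^u (1 + 2κα²|s|^{2(2α-1)})^{1/2} ds (extended oddly), with 0 < α < 1/2 and κ > 0. Then for all t > 0: 2α·h(t) ≤ 2α·h'(t)·t ≤ h(t). -/
open Real Filter MeasureTheory Set

/-!
Write `f` for the integrand of `g`, so that `g' = f` and `h'(t) = 1 / f(h t)`. With `x = h t`, the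
two inequalities become `x f(x) ≤ g(x)` and `2α g(x) ≤ x f(x)`. The first holds because `f`
decreases on `(0, ∞)`. For the second, with `c = 2κα²` and `p = 2(2α - 1)`, the function
`s f(s) = √(s² + c s^(p+2))` vanishes at `0` and has derivative
`(1 + 2α c s^p) / f(s) ≥ 2α f(s)` on `(0, ∞)` because `α < 1/2`; integrate from `0` to `x`.
-/

lemma intervalIntegrable_abs_rpow {r : ℝ} (hr : -1 < r) (a b : ℝ) :
    IntervalIntegrable (fun x : ℝ => |x| ^ r) volume a b := by
  have right_end_nonneg (c : ℝ) (hc : 0 ≤ c) :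
      IntervalIntegrable (fun x : ℝ => |x| ^ r) volume 0 c :=
    (intervalIntegral.intervalIntegrable_rpow' hr).congr_uIoo fun x hx => by
      rw [uIoo_of_le hc] at hx
      simp only [abs_of_pos hx.1]
  have right_end_any (c : ℝ) : IntervalIntegrable (fun x : ℝ => |x| ^ r) volume 0 c := by
    rcases le_total 0 c with hc | hc
    · exact right_end_nonneg c hc
    · rw [IntervalIntegrable.iff_comp_neg]
      simpa using right_end_nonneg (-c) (neg_nonneg.2 hc)
  exact (right_end_any a).symm.trans (right_end_any b)

noncomputable def gfunIntegrand (c p s : ℝ) : ℝ := √(1 + c * |s| ^ p)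

section gfunIntegrand

variable {c p : ℝ}

lemma gfunIntegrand_pos (hc : 0 ≤ c) (s : ℝ) : 0 < gfunIntegrand c p s :=
  sqrt_pos.2 (by positivity)

lemma gfunIntegrand_le (hc : 0 ≤ c) (s : ℝ) :
    gfunIntegrand c p s ≤ 1 + √c * |s| ^ (p / 2) := by
  have hsplit : √(c * |s| ^ p) = √c * |s| ^ (p / 2) := by
    rw [sqrt_mul hc, sqrt_eq_rpow (|s| ^ p), ← rpow_mul (abs_nonneg s)]
    ring_nf
  have hy : 0 ≤ c * |s| ^ p := by positivity
  rw [gfunIntegrand, ← hsplit, sqrt_le_left (by positivity)]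
  nlinarith [sq_sqrt hy, sqrt_nonneg (c * |s| ^ p)]

lemma continuousAt_gfunIntegrand {s : ℝ} (hs : s ≠ 0) : ContinuousAt (gfunIntegrand c p) s :=
  ((continuousAt_rpow_const _ _ (Or.inl (abs_ne_zero.2 hs))).comp
    continuous_abs.continuousAt |>.const_mul c |>.const_add 1).sqrt

lemma measurable_gfunIntegrand : Measurable (gfunIntegrand c p) := by
  unfold gfunIntegrand
  fun_prop

lemma intervalIntegrable_gfunIntegrand (hc : 0 ≤ c) (hp : -2 < p) (a b : ℝ) :
    IntervalIntegrable (gfunIntegrand c p) volume a b := by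
  have hdom : IntervalIntegrable (fun s => 1 + √c * |s| ^ (p / 2)) volume a b :=
    intervalIntegrable_const.add ((intervalIntegrable_abs_rpow (by linarith) a b).const_mul _)
  refine hdom.mono_fun measurable_gfunIntegrand.aestronglyMeasurable (.of_forall fun s => ?_)
  dsimp only
  rw [norm_of_nonneg (gfunIntegrand_pos hc s).le, norm_of_nonneg (by positivity)]
  exact gfunIntegrand_le hc s

lemma hasDerivAt_integral_gfunIntegrand (hc : 0 ≤ c) (hp : -2 < p) {x : ℝ} (hx : x ≠ 0) :
    HasDerivAt (fun u => ∫ s in (0:ℝ)..u, gfunIntegrand c p s) (gfunIntegrand c p x) x :=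
  intervalIntegral.integral_hasDerivAt_right (intervalIntegrable_gfunIntegrand hc hp 0 x)
    measurable_gfunIntegrand.stronglyMeasurable.stronglyMeasurableAtFilter
    (continuousAt_gfunIntegrand hx)

lemma strictMono_integral_gfunIntegrand (hc : 0 ≤ c) (hp : -2 < p) :
    StrictMono fun u => ∫ s in (0:ℝ)..u, gfunIntegrand c p s := by
  intro a b hab
  have hint := intervalIntegrable_gfunIntegrand hc hp
  have hpos : 0 < ∫ s in a..b, gfunIntegrand c p s :=
    intervalIntegral.intervalIntegral_pos_of_pos_on (hint a b)
      (fun s _ => gfunIntegrand_pos hc s) hab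
  have := intervalIntegral.integral_interval_sub_left (hint 0 b) (hint 0 a)
  simp only
  linarith

lemma mul_gfunIntegrand_le_integral (hc : 0 ≤ c) (hp : -2 < p) (hp0 : p ≤ 0) {x : ℝ}
    (hx : 0 ≤ x) :
    x * gfunIntegrand c p x ≤ ∫ s in (0:ℝ)..x, gfunIntegrand c p s := by
  calc x * gfunIntegrand c p x = ∫ _ in (0:ℝ)..x, gfunIntegrand c p x := by simp
    _ ≤ ∫ s in (0:ℝ)..x, gfunIntegrand c p s :=
      intervalIntegral.integral_mono_on_of_le_Ioo hx intervalIntegrable_const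
        (intervalIntegrable_gfunIntegrand hc hp 0 x) fun s hs => by
          have hs0 : 0 < s := hs.1
          unfold gfunIntegrand
          rw [abs_of_pos hs0, abs_of_nonneg hx]
          gcongr √(1 + c * ?_)
          exact rpow_le_rpow_of_nonpos hs0 hs.2.le hp0

lemma gfunIntegrand_sq (hc : 0 ≤ c) (s : ℝ) : gfunIntegrand c p s ^ 2 = 1 + c * |s| ^ p :=
  sq_sqrt (by positivity)

lemma sqrt_sq_add_mul_rpow_eq (hp : p + 2 ≠ 0) {x : ℝ} (hx : 0 ≤ x) :
    √(x ^ 2 + c * x ^ (p + 2)) = x * gfunIntegrand c p x := by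
  rw [gfunIntegrand, abs_of_nonneg hx, rpow_add' hx hp, rpow_two, ← sqrt_sq hx,
    ← sqrt_mul (sq_nonneg x), sqrt_sq hx]
  ring_nf

lemma hasDerivAt_sqrt_sq_add_mul_rpow (hc : 0 ≤ c) (hp : -2 < p) {u : ℝ} (hu : 0 < u) :
    HasDerivAt (fun u => √(u ^ 2 + c * u ^ (p + 2)))
      ((1 + (1 + p / 2) * c * u ^ p) / gfunIntegrand c p u) u := by
  have hinner : HasDerivAt (fun u => u ^ 2 + c * u ^ (p + 2))
      (2 * u + c * ((p + 2) * u ^ (p + 1))) u := by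
    refine ((hasDerivAt_pow 2 u).add
      ((hasDerivAt_rpow_const (Or.inl hu.ne')).const_mul c)).congr_deriv ?_
    norm_num [show p + 2 - 1 = p + 1 by ring]
  refine (hinner.sqrt (by positivity)).congr_deriv ?_
  have hf := gfunIntegrand_pos (p := p) hc u
  rw [sqrt_sq_add_mul_rpow_eq (by linarith) hu.le, rpow_add_one hu.ne']
  field_simp
  ring

lemma mul_integral_gfunIntegrand_le {β : ℝ} (hc : 0 ≤ c) (hp : -2 < p) (hβ : β ≤ 1)
    (hβp : β ≤ 1 + p / 2) {x : ℝ} (hx : 0 ≤ x) :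
    β * ∫ s in (0:ℝ)..x, gfunIntegrand c p s ≤ x * gfunIntegrand c p x := by
  set G : ℝ → ℝ := fun u => √(u ^ 2 + c * u ^ (p + 2))
  have hG (u : ℝ) (hu : 0 ≤ u) : G u = u * gfunIntegrand c p u :=
    sqrt_sq_add_mul_rpow_eq (by linarith) hu
  have hGcont : Continuous G := by
    have := continuous_rpow_const (q := p + 2) (by linarith)
    fun_prop
  have deriv_ge (u : ℝ) (hu : 0 < u) :
      β * gfunIntegrand c p u ≤ (1 + (1 + p / 2) * c * u ^ p) / gfunIntegrand c p u := by
    have hup : 0 ≤ c * u ^ p := by positivity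
    rw [le_div_iff₀ (gfunIntegrand_pos hc u), mul_assoc, ← sq, gfunIntegrand_sq hc,
      abs_of_pos hu]
    nlinarith [mul_le_mul_of_nonneg_right hβp hup]
  calc β * ∫ s in (0:ℝ)..x, gfunIntegrand c p s
      = ∫ s in (0:ℝ)..x, β * gfunIntegrand c p s :=
        (intervalIntegral.integral_const_mul _ _).symm
    _ ≤ G x - G 0 := intervalIntegral.integral_le_sub_of_hasDeriv_right_of_le hx
        hGcont.continuousOn
        (fun u hu => (hasDerivAt_sqrt_sq_add_mul_rpow hc hp hu.1).hasDerivWithinAt)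
        ((intervalIntegrable_iff_integrableOn_Icc_of_le hx).1
          ((intervalIntegrable_gfunIntegrand hc hp 0 x).const_mul β))
        (fun u hu => deriv_ge u hu.1)
    _ = x * gfunIntegrand c p x := by rw [hG x hx, hG 0 le_rfl]; simp

end gfunIntegrand

theorem stmt5 (κ α : ℝ) (hκ : 0 < κ) (hα0 : 0 < α) (hα1 : α < 1/2) (h : ℝ → ℝ)
    (hinv1 : Function.LeftInverse h (gfun κ α)) (hinv2 : Function.RightInverse h (gfun κ α)) :
    ∀ t : ℝ, 0 < t → 2*α * h t ≤ 2*α * deriv h t * t ∧ 2*α * deriv h t * t ≤ h t := by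
  intro t ht
  obtain ⟨x, rfl⟩ : ∃ x, gfun κ α x = t := ⟨h t, hinv2 t⟩
  set f := gfunIntegrand (2*κ*α^2) (2*(2*α-1))
  have hc : 0 ≤ 2*κ*α^2 := by positivity
  have hp : -2 < 2*(2*α-1) := by linarith
  have hg : StrictMono (gfun κ α) := strictMono_integral_gfunIntegrand hc hp
  have hh : StrictMono h := fun a b hab => hg.lt_iff_lt.1 (by rwa [hinv2, hinv2])
  have hg0 : gfun κ α 0 = 0 := intervalIntegral.integral_same
  have hx : 0 < x := hg.lt_iff_lt.1 (by rwa [hg0])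
  have hfx : 0 < f x := gfunIntegrand_pos hc x
  have hderiv : HasDerivAt h (f x)⁻¹ (gfun κ α x) :=
    .of_local_left_inverse (hh.monotone.continuous_of_surjective hinv1.surjective).continuousAt
      (by rw [hinv1 x]; exact hasDerivAt_integral_gfunIntegrand hc hp hx.ne') hfx.ne'
      (.of_forall hinv2)
  have hleft := mul_gfunIntegrand_le_integral hc hp (by linarith) hx.le
  have hright := mul_integral_gfunIntegrand_le (β := 2*α) hc hp (by linarith) (by linarith) hx.le
  rw [hderiv.deriv, hinv1 x, mul_right_comm _ (f x)⁻¹, ← div_eq_mul_inv, le_div_iff₀ hfx,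
    div_le_iff₀ hfx, mul_assoc]
  exact ⟨mul_le_mul_of_nonneg_left hleft (by positivity), hright⟩
end

section
/- Let 0 < α < 1/2, κ > 0, and h be the inverse of g(u) = ∫₀^u (1 + 2κα²|s|^{2(2α-1)})^{1/2} ds (extended oddly). Then for all t, s ∈ ℝ and all ϑ ∈ [0,1]: |h'(t) - h'(s)| ≤ 2^{1-ϑ}(2κα²)^{-ϑ/2}|h(t) - h(s)|^{(1-2α)ϑ}. -/
/-!
`gfun` is strictly increasing with `gfun' u = √(1 + c |u| ^ (-2β))`, where `c = 2κα²` and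
`β = 1 - 2α`, so its inverse satisfies `h' = ψ (|h| ^ β)` with `ψ y = y / √(y² + c)`; at `0`,
where `gfun` has a vertical tangent, this holds by continuity. Since `|ψ| ≤ 1`, `ψ` is
`1/√c`-Lipschitz and `y ↦ |y| ^ β` is `β`-Hölder, `|h' t - h' s|` is bounded both by `2` and by
`|h t - h s| ^ β / √c`; the claim is the interpolation `x ≤ a ^ (1 - ϑ) * b ^ ϑ` of the two.
-/

open Real Filter MeasureTheory Set

lemma locallyIntegrable_abs_rpow {r : ℝ} (hr : -1 < r) :
    LocallyIntegrable (fun x : ℝ => |x| ^ r) :=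
  locallyIntegrable_of_norm_le_rpow (by simp) (α := -r) (C := 1) (by simp; linarith)
    (ae_of_all _ fun x => by simp [abs_of_nonneg (rpow_nonneg (abs_nonneg x) r)])
    (measurable_abs.pow_const r).aestronglyMeasurable

lemma abs_rpow_sub_rpow_le {β x y : ℝ} (hβ0 : 0 ≤ β) (hβ1 : β ≤ 1) (hx : 0 ≤ x)
    (hy : 0 ≤ y) : |x ^ β - y ^ β| ≤ |x - y| ^ β := by
  wlog hyx : y ≤ x generalizing x y
  · rw [abs_sub_comm, abs_sub_comm x]
    exact this hy hx (le_of_not_ge hyx)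
  have hsub : x ^ β ≤ (x - y) ^ β + y ^ β := by
    simpa using rpow_add_le_add_rpow (sub_nonneg.2 hyx) hy hβ0 hβ1
  rw [abs_of_nonneg (sub_nonneg.2 (rpow_le_rpow hy hyx hβ0)), abs_of_nonneg (sub_nonneg.2 hyx)]
  linarith

lemma le_rpow_mul_rpow_of_le_of_le {x a b θ : ℝ} (hx : 0 ≤ x) (ha : x ≤ a) (hb : x ≤ b)
    (hθ0 : 0 ≤ θ) (hθ1 : θ ≤ 1) : x ≤ a ^ (1 - θ) * b ^ θ :=
  calc x = x ^ (1 - θ) * x ^ θ := by rw [← rpow_add' hx (by simp), sub_add_cancel, rpow_one]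
    _ ≤ a ^ (1 - θ) * b ^ θ := by
      gcongr
      exact rpow_nonneg (hx.trans ha) _

noncomputable def divSqrtSqAdd (c y : ℝ) : ℝ := y / √(y ^ 2 + c)

section divSqrtSqAdd

variable {c : ℝ}

lemma continuous_divSqrtSqAdd (hc : 0 < c) : Continuous (divSqrtSqAdd c) :=
  continuous_id.div (by fun_prop) fun y => (sqrt_pos.2 (by positivity)).ne'

lemma abs_divSqrtSqAdd_le_one (hc : 0 ≤ c) (y : ℝ) : |divSqrtSqAdd c y| ≤ 1 := by
  rw [divSqrtSqAdd, abs_div, abs_of_nonneg (sqrt_nonneg _)]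
  refine div_le_one_of_le₀ ?_ (sqrt_nonneg _)
  calc |y| = √(y ^ 2) := (sqrt_sq_eq_abs y).symm
    _ ≤ √(y ^ 2 + c) := sqrt_le_sqrt (by linarith)

lemma hasDerivAt_divSqrtSqAdd (hc : 0 < c) (y : ℝ) :
    HasDerivAt (divSqrtSqAdd c) (c / ((y ^ 2 + c) * √(y ^ 2 + c))) y := by
  have hpos : 0 < y ^ 2 + c := by positivity
  have hsqrt : HasDerivAt (fun y => √(y ^ 2 + c)) (y / √(y ^ 2 + c)) y := by
    refine (((hasDerivAt_pow 2 y).add_const c).sqrt hpos.ne').congr_deriv ?_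
    field_simp
    norm_num
  refine ((hasDerivAt_id y).div hsqrt (sqrt_pos.2 hpos).ne').congr_deriv ?_
  field_simp
  rw [sq_sqrt hpos.le, id]
  ring

lemma abs_divSqrtSqAdd_sub_le (hc : 0 < c) (y z : ℝ) :
    |divSqrtSqAdd c y - divSqrtSqAdd c z| ≤ |y - z| / √c := by
  have hderiv_le : ∀ x ∈ univ, ‖c / ((x ^ 2 + c) * √(x ^ 2 + c))‖ ≤ 1 / √c := by
    intro x _
    have hsqrt : √c ≤ √(x ^ 2 + c) := sqrt_le_sqrt (by nlinarith)
    have hsc : 0 < √c := sqrt_pos.2 hc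
    rw [norm_of_nonneg (by positivity), div_le_div_iff₀ (by positivity) hsc, one_mul]
    nlinarith [mul_le_mul (by nlinarith : c ≤ x ^ 2 + c) hsqrt hsc.le (by positivity)]
  simpa [div_eq_inv_mul, mul_comm] using convex_univ.norm_image_sub_le_of_norm_hasDerivWithin_le
    (fun x _ => (hasDerivAt_divSqrtSqAdd hc x).hasDerivWithinAt) hderiv_le
    (mem_univ z) (mem_univ y)

end divSqrtSqAdd

noncomputable def gfunDeriv (κ α s : ℝ) : ℝ :=
  √(1 + 2 * κ * α ^ 2 * |s| ^ (2 * (2 * α - 1)))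

section gfun

variable {κ α : ℝ}

@[simp]
lemma gfun_zero : gfun κ α 0 = 0 := intervalIntegral.integral_same

lemma measurable_gfunDeriv : Measurable (gfunDeriv κ α) := by
  unfold gfunDeriv
  fun_prop

lemma one_le_gfunDeriv (hκ : 0 ≤ κ) (s : ℝ) : 1 ≤ gfunDeriv κ α s :=
  one_le_sqrt.2 (le_add_of_nonneg_right (by positivity))

lemma gfunDeriv_le (hκ : 0 ≤ κ) (s : ℝ) :
    gfunDeriv κ α s ≤ 1 + √(2 * κ * α ^ 2) * |s| ^ (2 * α - 1) := by
  have hsq : (√(2 * κ * α ^ 2) * |s| ^ (2 * α - 1)) ^ 2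
      = 2 * κ * α ^ 2 * |s| ^ (2 * (2 * α - 1)) := by
    rw [mul_pow, sq_sqrt (by positivity), ← rpow_mul_natCast (abs_nonneg s)]
    norm_num [mul_comm]
  rw [gfunDeriv, ← hsq]
  refine sqrt_le_iff.2 ⟨by positivity, ?_⟩
  nlinarith [show 0 ≤ √(2 * κ * α ^ 2) * |s| ^ (2 * α - 1) by positivity]

lemma intervalIntegrable_gfunDeriv (hκ : 0 ≤ κ) (hα : 0 < α) (a b : ℝ) :
    IntervalIntegrable (gfunDeriv κ α) volume a b := by
  have hmajorant : LocallyIntegrable fun s : ℝ => 1 + √(2 * κ * α ^ 2) * |s| ^ (2 * α - 1) :=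
    (locallyIntegrable_const 1).add
      ((locallyIntegrable_abs_rpow (r := 2 * α - 1) (by linarith)).smul √(2 * κ * α ^ 2))
  refine ((hmajorant.mono ?_ (ae_of_all _ fun s => ?_)).integrableOn_isCompact
    isCompact_uIcc).intervalIntegrable
  · exact measurable_gfunDeriv.aestronglyMeasurable
  · rw [norm_of_nonneg (zero_le_one.trans (one_le_gfunDeriv hκ s)),
      norm_of_nonneg (by positivity)]
    exact gfunDeriv_le hκ s

lemma strictMono_gfun (hκ : 0 ≤ κ) (hα : 0 < α) : StrictMono (gfun κ α) := by
  intro u v huv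
  have hlen : v - u ≤ ∫ s in u..v, gfunDeriv κ α s := by
    simpa using intervalIntegral.integral_mono_on huv.le intervalIntegrable_const
      (intervalIntegrable_gfunDeriv hκ hα u v) fun s _ => one_le_gfunDeriv hκ s
  have hsub : gfun κ α v - gfun κ α u = ∫ s in u..v, gfunDeriv κ α s :=
    intervalIntegral.integral_interval_sub_left (intervalIntegrable_gfunDeriv hκ hα 0 v)
      (intervalIntegrable_gfunDeriv hκ hα 0 u)
  linarith

lemma hasDerivAt_gfun (hκ : 0 ≤ κ) (hα : 0 < α) {u : ℝ} (hu : u ≠ 0) :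
    HasDerivAt (gfun κ α) (gfunDeriv κ α u) u :=
  intervalIntegral.integral_hasDerivAt_right (intervalIntegrable_gfunDeriv hκ hα 0 u)
    measurable_gfunDeriv.stronglyMeasurable.stronglyMeasurableAtFilter
    (continuousAt_const.add (continuousAt_const.mul
      (continuous_abs.continuousAt.rpow_const (Or.inl (abs_ne_zero.2 hu))))).sqrt

lemma inv_gfunDeriv {x : ℝ} (hx : x ≠ 0) :
    (gfunDeriv κ α x)⁻¹ = divSqrtSqAdd (2 * κ * α ^ 2) (|x| ^ (1 - 2 * α)) := by
  set y := |x| ^ (1 - 2 * α)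
  have hy : 0 < y := rpow_pos_of_pos (abs_pos.2 hx) _
  have hpow : |x| ^ (2 * (2 * α - 1)) = (y ^ 2)⁻¹ := by
    rw [← rpow_natCast, ← rpow_mul (abs_nonneg x), ← rpow_neg (abs_nonneg x)]
    norm_num
    ring_nf
  rw [gfunDeriv, divSqrtSqAdd, hpow,
    show 1 + 2 * κ * α ^ 2 * (y ^ 2)⁻¹ = (y ^ 2 + 2 * κ * α ^ 2) / y ^ 2 by field_simp,
    sqrt_div' _ (sq_nonneg y), sqrt_sq hy.le, inv_div]

end gfun

lemma StrictMono.continuous_of_rightInverse {α β : Type*} [LinearOrder α] [TopologicalSpace α]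
    [OrderTopology α] [LinearOrder β] [TopologicalSpace β] [OrderTopology β] [DenselyOrdered β]
    {g : β → α} {h : α → β} (hg : StrictMono g) (hgh : Function.RightInverse h g) :
    Continuous h :=
  Monotone.continuous_of_surjective (fun a b hab => hg.le_iff_le.1 (by rwa [hgh a, hgh b]))
    fun b => ⟨g b, hg.injective (hgh (g b))⟩

theorem hasDerivAt_of_rightInverse_gfun {κ α : ℝ} (hκ : 0 < κ) (hα0 : 0 < α) (hα1 : α ≤ 1 / 2)
    {h : ℝ → ℝ} (hgh : Function.RightInverse h (gfun κ α)) (t : ℝ) :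
    HasDerivAt h (divSqrtSqAdd (2 * κ * α ^ 2) (|h t| ^ (1 - 2 * α))) t := by
  have hcont : Continuous h := (strictMono_gfun hκ.le hα0).continuous_of_rightInverse hgh
  have hne : ∀ {r}, r ≠ 0 → h r ≠ 0 := fun {r} hr h0 => hr (by rw [← hgh r, h0, gfun_zero])
  refine hasDerivAt_of_hasDerivAt_of_ne' (x := 0)
    (g := fun r => divSqrtSqAdd (2 * κ * α ^ 2) (|h r| ^ (1 - 2 * α)))
    (fun r hr => ?_) hcont.continuousAt ?_ t
  · rw [← inv_gfunDeriv (hne hr)]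
    exact (hasDerivAt_gfun hκ.le hα0 (hne hr)).of_local_left_inverse hcont.continuousAt
      (zero_lt_one.trans_le (one_le_gfunDeriv hκ.le _)).ne' (Eventually.of_forall hgh)
  · exact (continuous_divSqrtSqAdd (by positivity)).continuousAt.comp
      ((hcont.abs.rpow_const fun _ => Or.inr (by linarith)).continuousAt)

theorem stmt10_general (κ α : ℝ) (hκ : 0 < κ) (hα0 : 0 < α) (hα1 : α < 1/2) (h : ℝ → ℝ)
    (hinv2 : Function.RightInverse h (gfun κ α)) :
    ∀ t s : ℝ, ∀ ϑ ∈ Set.Icc (0:ℝ) 1,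
      |deriv h t - deriv h s|
        ≤ 2 ^ (1-ϑ) * (2*κ*α^2) ^ (-(ϑ/2)) * |h t - h s| ^ ((1-2*α)*ϑ) := by
  intro t s ϑ ⟨hϑ0, hϑ1⟩
  set c := 2 * κ * α ^ 2
  have hc : 0 < c := by positivity
  have hβ : 0 ≤ 1 - 2 * α := by linarith
  rw [(hasDerivAt_of_rightInverse_gfun hκ hα0 hα1.le hinv2 t).deriv,
    (hasDerivAt_of_rightInverse_gfun hκ hα0 hα1.le hinv2 s).deriv]
  set ψt := divSqrtSqAdd c (|h t| ^ (1 - 2 * α))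
  set ψs := divSqrtSqAdd c (|h s| ^ (1 - 2 * α))
  have hbounded : |ψt - ψs| ≤ 2 := (abs_sub _ _).trans (by
    linarith [abs_divSqrtSqAdd_le_one hc.le (|h t| ^ (1 - 2 * α)),
      abs_divSqrtSqAdd_le_one hc.le (|h s| ^ (1 - 2 * α))])
  have hholder : |ψt - ψs| ≤ |h t - h s| ^ (1 - 2 * α) / √c :=
    (abs_divSqrtSqAdd_sub_le hc _ _).trans <| div_le_div_of_nonneg_right
      ((abs_rpow_sub_rpow_le hβ (by linarith) (abs_nonneg _) (abs_nonneg _)).trans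
        (rpow_le_rpow (abs_nonneg _) (abs_abs_sub_abs_le_abs_sub _ _) hβ)) (sqrt_nonneg c)
  calc |ψt - ψs| ≤ 2 ^ (1 - ϑ) * (|h t - h s| ^ (1 - 2 * α) / √c) ^ ϑ :=
        le_rpow_mul_rpow_of_le_of_le (abs_nonneg _) hbounded hholder hϑ0 hϑ1
    _ = 2 ^ (1 - ϑ) * c ^ (-(ϑ / 2)) * |h t - h s| ^ ((1 - 2 * α) * ϑ) := by
      rw [div_rpow (by positivity) (sqrt_nonneg c), ← rpow_mul (abs_nonneg _), sqrt_eq_rpow,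
        ← rpow_mul hc.le, rpow_neg hc.le]
      ring_nf

theorem stmt10 (κ α : ℝ) (hκ : 0 < κ) (hα0 : 0 < α) (hα1 : α < 1/2) (h : ℝ → ℝ)
    (hinv1 : Function.LeftInverse h (gfun κ α)) (hinv2 : Function.RightInverse h (gfun κ α)) :
    ∀ t s : ℝ, ∀ ϑ ∈ Set.Icc (0:ℝ) 1,
      |deriv h t - deriv h s|
        ≤ 2 ^ (1-ϑ) * (2*κ*α^2) ^ (-(ϑ/2)) * |h t - h s| ^ ((1-2*α)*ϑ) :=
  stmt10_general κ α hκ hα0 hα1 h hinv2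
end

section
/- Let 0 < α < 1/2, κ > 0, and h as above. Then there exists d₀ > 0 such that liminf_{t→+∞} (t - h(t)) ≥ d₀. -/
open Real Filter MeasureTheory Set

theorem stmt13 (κ α : ℝ) (hκ : 0 < κ) (hα0 : 0 < α) (hα1 : α < 1/2) (h : ℝ → ℝ)
    (hinv1 : Function.LeftInverse h (gfun κ α)) (hinv2 : Function.RightInverse h (gfun κ α)) :
    ∃ d₀ > (0:ℝ), ∀ ε > (0:ℝ), ∀ᶠ t in Filter.atTop, d₀ - ε ≤ t - h t := by
  set c : ℝ := 2*κ*α^2 with hc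
  have hc0 : 0 < c := by positivity
  set F : ℝ → ℝ := fun s => Real.sqrt (1 + c * |s| ^ (2*(2*α-1))) with hF
  set r : ℝ := 2*α - 1 with hr
  have hr1 : -1 < r := by rw [hr]; linarith
  have hr0 : r < 0 := by rw [hr]; linarith
  -- F ≥ 1
  have hF1 : ∀ s, 1 ≤ F s := by
    intro s
    have h1 : (1:ℝ) ≤ 1 + c * |s| ^ (2*(2*α-1)) := by
      have : 0 ≤ c * |s| ^ (2*(2*α-1)) := by positivity
      linarith
    calc (1:ℝ) = Real.sqrt 1 := by simp
    _ ≤ F s := Real.sqrt_le_sqrt h1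
  -- pointwise upper bound F s ≤ 1 + √c * |s| ^ r
  have hFub : ∀ s : ℝ, F s ≤ 1 + Real.sqrt c * |s| ^ r := by
    intro s
    have habs : |s| ^ (2*(2*α-1)) = (|s| ^ r) ^ 2 := by
      rw [hr, show 2*(2*α-1) = (2*α-1) * 2 by ring,
        Real.rpow_mul (abs_nonneg s), Real.rpow_two]
    have hkey : 1 + c * |s| ^ (2*(2*α-1)) ≤ (1 + Real.sqrt c * |s| ^ r) ^ 2 := by
      rw [habs]
      have h1 : 0 ≤ Real.sqrt c * |s| ^ r := by positivity
      have h2 : Real.sqrt c ^ 2 = c := Real.sq_sqrt hc0.le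
      nlinarith [Real.rpow_nonneg (abs_nonneg s) r]
    calc F s ≤ Real.sqrt ((1 + Real.sqrt c * |s| ^ r) ^ 2) := Real.sqrt_le_sqrt hkey
    _ = 1 + Real.sqrt c * |s| ^ r := by
        rw [Real.sqrt_sq (by positivity)]
  -- integrability of F on [0, b] for b ≥ 0
  have hFmeas : Measurable F := by
    fun_prop
  have hInt : ∀ b : ℝ, 0 ≤ b → IntervalIntegrable F volume 0 b := by
    intro b hb
    have hG : IntervalIntegrable (fun x : ℝ => 1 + Real.sqrt c * x ^ r) volume 0 b :=
      intervalIntegrable_const.add ((intervalIntegral.intervalIntegrable_rpow' hr1).smul (Real.sqrt c))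
    refine hG.mono_fun (hFmeas.aestronglyMeasurable) ?_
    rw [Filter.EventuallyLE, ae_restrict_iff' measurableSet_uIoc]
    filter_upwards with x hx
    rw [Set.uIoc_of_le hb] at hx
    have hx0 : 0 < x := hx.1
    have h1 : ‖F x‖ = F x := Real.norm_of_nonneg (le_trans zero_le_one (hF1 x))
    have h2 : F x ≤ 1 + Real.sqrt c * x ^ r := by
      have := hFub x; rwa [abs_of_pos hx0] at this
    have h3 : 1 + Real.sqrt c * x ^ r ≤ ‖1 + Real.sqrt c * x ^ r‖ := le_abs_self _
    simpa [h1] using le_trans h2 h3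
  have hInt2 : ∀ a b : ℝ, 0 ≤ a → 0 ≤ b → IntervalIntegrable F volume a b := by
    intro a b ha hb
    exact (hInt a ha).symm.trans (hInt b hb)
  -- g(b) - g(a) ≥ b - a for 0 ≤ a ≤ b
  have hgdiff : ∀ a b : ℝ, 0 ≤ a → a ≤ b →
      b - a ≤ gfun κ α b - gfun κ α a := by
    intro a b ha hab
    have hb : 0 ≤ b := le_trans ha hab
    have hsplit : gfun κ α a + ∫ s in a..b, F s = gfun κ α b := by
      unfold gfun
      exact intervalIntegral.integral_add_adjacent_intervals (hInt a ha) (hInt2 a b ha hb)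
    have hmono : b - a ≤ ∫ s in a..b, F s := by
      have h1 : ∫ s in a..b, (1:ℝ) = b - a := by simp
      rw [← h1]
      exact intervalIntegral.integral_mono_on hab intervalIntegrable_const
        (hInt2 a b ha hb) (fun x _ => hF1 x)
    linarith
  have heqneg : (fun s => F (-s)) = F := by
    funext s; simp [hF]
  have hIntAll : ∀ a : ℝ, IntervalIntegrable F volume 0 a := by
    intro a
    rcases le_total 0 a with ha | ha
    · exact hInt a ha
    · rw [IntervalIntegrable.iff_comp_neg, heqneg, neg_zero]
      exact hInt (-a) (by linarith)
  have hgmono : StrictMono (gfun κ α) := by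
    intro a b hab
    have hIab : IntervalIntegrable F volume a b := (hIntAll a).symm.trans (hIntAll b)
    have hsplit : gfun κ α a + ∫ s in a..b, F s = gfun κ α b := by
      unfold gfun
      exact intervalIntegral.integral_add_adjacent_intervals (hIntAll a) hIab
    have hmono : b - a ≤ ∫ s in a..b, F s := by
      have h1 : ∫ s in a..b, (1:ℝ) = b - a := by simp
      rw [← h1]
      exact intervalIntegral.integral_mono_on hab.le intervalIntegrable_const
        hIab (fun x _ => hF1 x)
    linarith
  -- h is monotone
  have hhmono : Monotone h := by
    intro s t hst
    by_contra hcon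
    push_neg at hcon
    have := hgmono hcon
    rw [hinv2 t, hinv2 s] at this
    exact absurd this (not_lt.mpr hst)
  -- d₀ := g 1 - 1 > 0
  have hd0 : 1 < gfun κ α 1 := by
    have hconst : Real.sqrt (1 + c) ≤ gfun κ α 1 := by
      have h1 : ∫ s in (0:ℝ)..1, Real.sqrt (1 + c) = Real.sqrt (1 + c) := by simp
      rw [← h1]
      unfold gfun
      refine intervalIntegral.integral_mono_ae_restrict zero_le_one
        intervalIntegrable_const (hInt 1 zero_le_one) ?_
      have h0g : ∀ᵐ (x : ℝ), x ≠ 0 := by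
        rw [ae_iff]
        simp
      filter_upwards [ae_restrict_of_ae h0g, ae_restrict_mem measurableSet_Icc]
        with x hx hxI
      have hx0 : 0 < x := lt_of_le_of_ne hxI.1 (Ne.symm hx)
      have hxabs : |x| = x := abs_of_pos hx0
      have hexp : 2*(2*α-1) ≤ 0 := by linarith
      have h1 : (1:ℝ) ≤ |x| ^ (2*(2*α-1)) := by
        rw [hxabs]
        exact Real.one_le_rpow_of_pos_of_le_one_of_nonpos hx0 hxI.2 hexp
      have h2 : 1 + c ≤ 1 + c * |x| ^ (2*(2*α-1)) := by nlinarith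
      exact Real.sqrt_le_sqrt h2
    have h2 : 1 < Real.sqrt (1 + c) := by
      rw [show (1:ℝ) < Real.sqrt (1+c) ↔ (1:ℝ)^2 < 1 + c from
        Real.lt_sqrt zero_le_one]
      nlinarith
    linarith
  refine ⟨gfun κ α 1 - 1, by linarith, fun ε hε => ?_⟩
  rw [Filter.eventually_atTop]
  refine ⟨max (gfun κ α 1) 1, fun t ht => ?_⟩
  have ht1 : gfun κ α 1 ≤ t := le_trans (le_max_left _ _) ht
  have hht : 1 ≤ h t := by
    have := hhmono ht1
    rwa [hinv1 1] at this
  have hgt : t = gfun κ α (h t) := (hinv2 t).symm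
  have := hgdiff 1 (h t) zero_le_one hht
  rw [← hgt] at this
  linarith
end
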